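/- arXiv:2111.08624 — 12 statements merged into one kernel-verified Lean document; each statement's English description precedes it below -/
import Mathlib

section
/- Let g₂, g : ℝ → ℝ be smooth with g₂ nonvanishing, and let L₃ ∈ ℝ. Define V(t,r) = −(g₂''/(2g₂)) r² + (g'/g₂) r − L₃²/(2r²). Then for any solution r(t) > 0, θ(t) of the central-motion equations r'' = r(θ')² − ∂V/∂r, r²θ' = L₃, the quantity I(t) = g₂(t) r'(t) − g₂'(t) r(t) + g(t) is constant. -/
/-- The case (a) integrable time-dependent central potentials: along any solution
of the central-motion equations with potential
`V(t,r) = −(g₂''/(2g₂)) r² + (g'/g₂) r − L₃²/(2r²)`,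
the quantity `I = g₂ ṙ − ġ₂ r + g` is constant. -/
theorem case_a_central_first_integral
    (g₂ g : ℝ → ℝ) (L₃ : ℝ)
    (hg₂ : ContDiff ℝ (⊤ : ℕ∞) g₂) (hg : ContDiff ℝ (⊤ : ℕ∞) g) (hne : ∀ t, g₂ t ≠ 0)
    (V : ℝ → ℝ → ℝ)
    (hV : ∀ t x, V t x
      = -(deriv (deriv g₂) t / (2 * g₂ t)) * x ^ 2 + (deriv g t / g₂ t) * x
        - L₃ ^ 2 / (2 * x ^ 2))
    (r θ : ℝ → ℝ) (hrpos : ∀ t, 0 < r t)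
    (hr : Differentiable ℝ r) (hr' : Differentiable ℝ (deriv r))
    (hθ : Differentiable ℝ θ)
    (heq : ∀ t, deriv (deriv r) t
      = r t * (deriv θ t) ^ 2 - deriv (fun x => V t x) (r t))
    (hang : ∀ t, (r t) ^ 2 * deriv θ t = L₃) :
    ∀ t₁ t₂, g₂ t₁ * deriv r t₁ - deriv g₂ t₁ * r t₁ + g t₁
      = g₂ t₂ * deriv r t₂ - deriv g₂ t₂ * r t₂ + g t₂ := by
  have hg₂I : ContDiff ℝ ((⊤ : ℕ∞) : WithTop ℕ∞) g₂ := hg₂.of_le (by simp)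
  have hgI : ContDiff ℝ ((⊤ : ℕ∞) : WithTop ℕ∞) g := hg.of_le (by simp)
  have hg₂' : ContDiff ℝ ((⊤ : ℕ∞) : WithTop ℕ∞) (deriv g₂) := (contDiff_infty_iff_deriv.mp hg₂I).2
  -- derivative of V in x
  have hVder : ∀ t, deriv (fun x => V t x) (r t)
      = -(deriv (deriv g₂) t / g₂ t) * r t + deriv g t / g₂ t + L₃ ^ 2 / (r t) ^ 3 := by
    intro t
    set a := r t with ha'
    have ha : a ≠ 0 := (hrpos t).ne'
    set c : ℝ := -(deriv (deriv g₂) t / (2 * g₂ t))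
    set d : ℝ := deriv g t / g₂ t
    have h2 : HasDerivAt (fun x : ℝ => x ^ 2) (2 * a) a := by
      simpa using hasDerivAt_pow 2 a
    have h2inv : HasDerivAt (fun x : ℝ => (x ^ 2)⁻¹) (-(2 * a) / (a ^ 2) ^ 2) a :=
      h2.inv (pow_ne_zero 2 ha)
    have hfull : HasDerivAt (fun x : ℝ => c * x ^ 2 + d * x - L₃ ^ 2 / (2 * x ^ 2))
        (c * (2 * a) + d * 1 - L₃ ^ 2 / 2 * (-(2 * a) / (a ^ 2) ^ 2)) a := by
      have hA := h2.const_mul c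
      have hB := (hasDerivAt_id a).const_mul d
      have hC := h2inv.const_mul (L₃ ^ 2 / 2)
      have : (fun x : ℝ => c * x ^ 2 + d * x - L₃ ^ 2 / (2 * x ^ 2))
          = fun x : ℝ => c * x ^ 2 + d * x - L₃ ^ 2 / 2 * (x ^ 2)⁻¹ := by
        funext x
        ring
      rw [this]
      exact (hA.add hB).sub hC
    have hfun : (fun x => V t x) = fun x : ℝ => c * x ^ 2 + d * x - L₃ ^ 2 / (2 * x ^ 2) := by
      funext x; rw [hV t x]
    rw [hfun, hfull.deriv]
    have hg₂t := hne t
    simp only [c, d]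
    field_simp
    ring
  -- second derivative of r
  have hr'' : ∀ t, deriv (deriv r) t
      = deriv (deriv g₂) t / g₂ t * r t - deriv g t / g₂ t := by
    intro t
    have hrne : r t ≠ 0 := (hrpos t).ne'
    have hθt : deriv θ t = L₃ / (r t) ^ 2 := by
      rw [eq_div_iff (pow_ne_zero 2 hrne)]
      linarith [hang t]
    rw [heq t, hVder t, hθt]
    field_simp
    ring
  -- the first integral
  set I : ℝ → ℝ := fun t => g₂ t * deriv r t - deriv g₂ t * r t + g t with hI
  have hdiff : Differentiable ℝ I := by
    exact (((hg₂I.differentiable (by simp)).mul hr').sub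
      ((hg₂'.differentiable (by simp)).mul hr)).add (hgI.differentiable (by simp))
  have hderivI : ∀ t, deriv I t = 0 := by
    intro t
    have h1 : HasDerivAt g₂ (deriv g₂ t) t := (hg₂I.differentiable (by simp) t).hasDerivAt
    have h2 : HasDerivAt (deriv r) (deriv (deriv r) t) t := (hr' t).hasDerivAt
    have h3 : HasDerivAt (deriv g₂) (deriv (deriv g₂) t) t :=
      (hg₂'.differentiable (by simp) t).hasDerivAt
    have h4 : HasDerivAt r (deriv r t) t := (hr t).hasDerivAt
    have h5 : HasDerivAt g (deriv g t) t := (hgI.differentiable (by simp) t).hasDerivAt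
    have : HasDerivAt I
        (deriv g₂ t * deriv r t + g₂ t * deriv (deriv r) t
          - (deriv (deriv g₂) t * r t + deriv g₂ t * deriv r t) + deriv g t) t :=
      ((h1.mul h2).sub (h3.mul h4)).add h5
    rw [this.deriv, hr'' t]
    have hg₂t := hne t
    field_simp
    ring
  intro t₁ t₂
  exact is_const_of_deriv_eq_zero hdiff hderivI t₁ t₂
end

section
/- Let g₁ : ℝ → ℝ be smooth and positive, g₂ : ℝ → ℝ smooth, and F : ℝ → ℝ differentiable. Let h(t) be an antiderivative of g₁(t)^{-3/2} g₂(t). Define U(t,r) = [ (g₁')²/(8g₁²) − g₁''/(4g₁) ] r² + (1/(2g₁)) ( g₂' − g₂ g₁'/(2g₁) ) r + (1/(2g₁)) F( g₁^{-1/2} r + h(t)/2 ). Then for any twice differentiable solution r(t) of r'' = −∂U/∂r(t, r(t)), the quantity I(t) = g₁ (r')² + (g₂ − g₁' r) r' + F( g₁^{-1/2} r + h/2 ) + (g₁' r − g₂)²/(4g₁) is constant. -/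
/-- The case (b) quadratic first integral of Lewis–Leach type for the
one-dimensional time-dependent potential
`U = [(g₁')²/(8g₁²) − g₁''/(4g₁)] r² + (1/(2g₁))(g₂' − g₂g₁'/(2g₁)) r
  + (1/(2g₁)) F(g₁^{-1/2} r + h/2)`. -/
theorem case_b_quadratic_first_integral
    (g₁ g₂ h : ℝ → ℝ) (F : ℝ → ℝ)
    (hg₁ : ContDiff ℝ (⊤ : ℕ∞) g₁) (hg₁pos : ∀ t, 0 < g₁ t)
    (hg₂ : ContDiff ℝ (⊤ : ℕ∞) g₂) (hF : Differentiable ℝ F)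
    (hh : ∀ t, HasDerivAt h (g₂ t / (g₁ t * Real.sqrt (g₁ t))) t)
    (U : ℝ → ℝ → ℝ)
    (hU : ∀ t x, U t x
      = ((deriv g₁ t) ^ 2 / (8 * (g₁ t) ^ 2) - deriv (deriv g₁) t / (4 * g₁ t)) * x ^ 2
        + (1 / (2 * g₁ t)) * (deriv g₂ t - g₂ t * deriv g₁ t / (2 * g₁ t)) * x
        + (1 / (2 * g₁ t)) * F (x / Real.sqrt (g₁ t) + h t / 2))
    (r : ℝ → ℝ) (hr : Differentiable ℝ r) (hr' : Differentiable ℝ (deriv r))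
    (heq : ∀ t, deriv (deriv r) t = - deriv (fun x => U t x) (r t)) :
    ∀ t₁ t₂,
      g₁ t₁ * (deriv r t₁) ^ 2 + (g₂ t₁ - deriv g₁ t₁ * r t₁) * deriv r t₁
        + F (r t₁ / Real.sqrt (g₁ t₁) + h t₁ / 2)
        + (deriv g₁ t₁ * r t₁ - g₂ t₁) ^ 2 / (4 * g₁ t₁)
      = g₁ t₂ * (deriv r t₂) ^ 2 + (g₂ t₂ - deriv g₁ t₂ * r t₂) * deriv r t₂
        + F (r t₂ / Real.sqrt (g₁ t₂) + h t₂ / 2)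
        + (deriv g₁ t₂ * r t₂ - g₂ t₂) ^ 2 / (4 * g₁ t₂) := by
  set I : ℝ → ℝ := fun t =>
    g₁ t * (deriv r t) ^ 2 + (g₂ t - deriv g₁ t * r t) * deriv r t
      + F (r t / Real.sqrt (g₁ t) + h t / 2)
      + (deriv g₁ t * r t - g₂ t) ^ 2 / (4 * g₁ t) with hI
  have key : ∀ t, HasDerivAt I 0 t := by
    intro t
    -- abbreviations
    have ha : (0:ℝ) < g₁ t := hg₁pos t
    have hane : g₁ t ≠ 0 := ne_of_gt ha
    have hs : (0:ℝ) < Real.sqrt (g₁ t) := Real.sqrt_pos.mpr ha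
    have hsne : Real.sqrt (g₁ t) ≠ 0 := ne_of_gt hs
    have hs2 : Real.sqrt (g₁ t) ^ 2 = g₁ t := Real.sq_sqrt ha.le
    have hg₁d : Differentiable ℝ g₁ := hg₁.differentiable (by simp)
    have hg₁'d : Differentiable ℝ (deriv g₁) :=
      ((contDiff_infty_iff_deriv.mp (hg₁.of_le (by simp))).2).differentiable (by simp)
    have hg₂d : Differentiable ℝ g₂ := hg₂.differentiable (by simp)
    have hg1 : HasDerivAt g₁ (deriv g₁ t) t := (hg₁d t).hasDerivAt
    have hg1' : HasDerivAt (deriv g₁) (deriv (deriv g₁) t) t := (hg₁'d t).hasDerivAt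
    have hg2 : HasDerivAt g₂ (deriv g₂ t) t := (hg₂d t).hasDerivAt
    have hrd : HasDerivAt r (deriv r t) t := (hr t).hasDerivAt
    have hrd' : HasDerivAt (deriv r) (deriv (deriv r) t) t := (hr' t).hasDerivAt
    have hsd : HasDerivAt (fun τ => Real.sqrt (g₁ τ))
        (deriv g₁ t / (2 * Real.sqrt (g₁ t))) t :=
      (Real.hasDerivAt_sqrt hane).comp t hg1 |>.congr_deriv (by ring)
    -- derivative of the argument of F
    have hu : HasDerivAt (fun τ => r τ / Real.sqrt (g₁ τ) + h τ / 2)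
        ((deriv r t * Real.sqrt (g₁ t) - r t * (deriv g₁ t / (2 * Real.sqrt (g₁ t))))
            / Real.sqrt (g₁ t) ^ 2
          + (g₂ t / (g₁ t * Real.sqrt (g₁ t))) / 2) t :=
      ((hrd.div hsd hsne).add ((hh t).div_const 2))
    have hFu : HasDerivAt F (deriv F (r t / Real.sqrt (g₁ t) + h t / 2))
        (r t / Real.sqrt (g₁ t) + h t / 2) := (hF _).hasDerivAt
    set f' := deriv F (r t / Real.sqrt (g₁ t) + h t / 2) with hf'
    -- compute deriv (fun x => U t x) (r t)
    have hUx : deriv (fun x => U t x) (r t)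
        = ((deriv g₁ t) ^ 2 / (8 * (g₁ t) ^ 2) - deriv (deriv g₁) t / (4 * g₁ t))
            * (2 * r t)
          + (1 / (2 * g₁ t)) * (deriv g₂ t - g₂ t * deriv g₁ t / (2 * g₁ t))
          + (1 / (2 * g₁ t)) * (f' * (1 / Real.sqrt (g₁ t))) := by
      have hfun : (fun x => U t x)
          = fun x => ((deriv g₁ t) ^ 2 / (8 * (g₁ t) ^ 2) - deriv (deriv g₁) t / (4 * g₁ t)) * x ^ 2
            + (1 / (2 * g₁ t)) * (deriv g₂ t - g₂ t * deriv g₁ t / (2 * g₁ t)) * x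
            + (1 / (2 * g₁ t)) * F (x / Real.sqrt (g₁ t) + h t / 2) := funext (hU t)
      rw [hfun]
      have h1 : HasDerivAt (fun x : ℝ => ((deriv g₁ t) ^ 2 / (8 * (g₁ t) ^ 2)
          - deriv (deriv g₁) t / (4 * g₁ t)) * x ^ 2)
          (((deriv g₁ t) ^ 2 / (8 * (g₁ t) ^ 2) - deriv (deriv g₁) t / (4 * g₁ t))
            * (2 * r t)) (r t) := by
        have := (hasDerivAt_pow 2 (r t)).const_mul
            ((deriv g₁ t) ^ 2 / (8 * (g₁ t) ^ 2) - deriv (deriv g₁) t / (4 * g₁ t))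
        exact this.congr_deriv (by push_cast; ring)
      have h2 : HasDerivAt (fun x : ℝ => (1 / (2 * g₁ t))
          * (deriv g₂ t - g₂ t * deriv g₁ t / (2 * g₁ t)) * x)
          ((1 / (2 * g₁ t)) * (deriv g₂ t - g₂ t * deriv g₁ t / (2 * g₁ t))) (r t) := by
        simpa using (hasDerivAt_id (r t)).const_mul
          ((1 / (2 * g₁ t)) * (deriv g₂ t - g₂ t * deriv g₁ t / (2 * g₁ t)))
      have hin : HasDerivAt (fun x : ℝ => x / Real.sqrt (g₁ t) + h t / 2)
          (1 / Real.sqrt (g₁ t)) (r t) := by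
        simpa using ((hasDerivAt_id (r t)).div_const (Real.sqrt (g₁ t))).add_const (h t / 2)
      have h3 : HasDerivAt (fun x : ℝ => (1 / (2 * g₁ t)) * F (x / Real.sqrt (g₁ t) + h t / 2))
          ((1 / (2 * g₁ t)) * (f' * (1 / Real.sqrt (g₁ t)))) (r t) :=
        (hFu.comp (r t) hin).const_mul _
      exact ((h1.add h2).add h3).deriv
    have hr2 : deriv (deriv r) t
        = -(((deriv g₁ t) ^ 2 / (8 * (g₁ t) ^ 2) - deriv (deriv g₁) t / (4 * g₁ t))
            * (2 * r t)
          + (1 / (2 * g₁ t)) * (deriv g₂ t - g₂ t * deriv g₁ t / (2 * g₁ t))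
          + (1 / (2 * g₁ t)) * (f' * (1 / Real.sqrt (g₁ t)))) := by
      rw [heq t, hUx]
    -- each piece of I
    have p1 : HasDerivAt (fun τ => g₁ τ * (deriv r τ) ^ 2)
        (deriv g₁ t * (deriv r t) ^ 2 + g₁ t * (2 * deriv r t * deriv (deriv r) t)) t := by
      have := hg1.mul (hrd'.pow 2)
      exact this.congr_deriv (by simp only [Pi.pow_apply, Pi.mul_apply, Pi.sub_apply]; push_cast; ring)
    have p2 : HasDerivAt (fun τ => (g₂ τ - deriv g₁ τ * r τ) * deriv r τ)
        ((deriv g₂ t - (deriv (deriv g₁) t * r t + deriv g₁ t * deriv r t)) * deriv r t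
          + (g₂ t - deriv g₁ t * r t) * deriv (deriv r) t) t :=
      (hg2.sub (hg1'.mul hrd)).mul hrd'
    have p3 : HasDerivAt (fun τ => F (r τ / Real.sqrt (g₁ τ) + h τ / 2))
        (f' * ((deriv r t * Real.sqrt (g₁ t)
            - r t * (deriv g₁ t / (2 * Real.sqrt (g₁ t)))) / Real.sqrt (g₁ t) ^ 2
          + (g₂ t / (g₁ t * Real.sqrt (g₁ t))) / 2)) t :=
      hFu.comp t hu
    have p4 : HasDerivAt (fun τ => (deriv g₁ τ * r τ - g₂ τ) ^ 2 / (4 * g₁ τ))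
        ((2 * (deriv g₁ t * r t - g₂ t)
            * (deriv (deriv g₁) t * r t + deriv g₁ t * deriv r t - deriv g₂ t) * (4 * g₁ t)
          - (deriv g₁ t * r t - g₂ t) ^ 2 * (4 * deriv g₁ t)) / (4 * g₁ t) ^ 2) t := by
      have hnum : HasDerivAt (fun τ => (deriv g₁ τ * r τ - g₂ τ) ^ 2)
          (2 * (deriv g₁ t * r t - g₂ t)
            * (deriv (deriv g₁) t * r t + deriv g₁ t * deriv r t - deriv g₂ t)) t := by
        have := ((hg1'.mul hrd).sub hg2).pow 2
        exact this.congr_deriv (by simp only [Pi.pow_apply, Pi.mul_apply, Pi.sub_apply]; push_cast; ring)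
      have hden : HasDerivAt (fun τ => 4 * g₁ τ) (4 * deriv g₁ t) t := hg1.const_mul 4
      exact hnum.div hden (by positivity)
    have hIt := ((p1.add p2).add p3).add p4
    have : I = fun τ => g₁ τ * (deriv r τ) ^ 2 + (g₂ τ - deriv g₁ τ * r τ) * deriv r τ
        + F (r τ / Real.sqrt (g₁ τ) + h τ / 2)
        + (deriv g₁ τ * r τ - g₂ τ) ^ 2 / (4 * g₁ τ) := hI
    rw [this]
    refine hIt.congr_deriv ?_
    rw [hr2]
    set s := Real.sqrt (g₁ t) with hsdef
    rw [← hs2]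
    have hsne' : s ≠ 0 := hsne
    field_simp
    ring
  intro t₁ t₂
  have hdiff : Differentiable ℝ I := fun t => (key t).differentiableAt
  have hderiv : ∀ t, deriv I t = 0 := fun t => (key t).deriv
  have := is_const_of_deriv_eq_zero hdiff hderiv t₁ t₂
  simpa [hI] using this
end

section
/- Let g₁ : ℝ → ℝ be smooth and positive and c₀ ∈ ℝ, L₃ ∈ ℝ. Define the time-dependent oscillator potential V(t,r) = −[ g₁''/(4g₁) − (g₁')²/(8g₁²) − c₀/(4g₁²) ] r². Then for any solution r(t) > 0 of r'' = L₃²/r³ − ∂V/∂r(t, r(t)), the quantity I(t) = g₁ ( (r')² + L₃²/r² ) − g₁' r r' + (g₁')² r²/(4g₁) + c₀ r²/(2g₁) is constant. -/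
/-- The time-dependent oscillator
`V = −[g₁''/(4g₁) − (g₁')²/(8g₁²) − c₀/(4g₁²)] r²` admits a quadratic first
integral for the radial motion reduced by the angular momentum `L₃`. -/
theorem time_dependent_oscillator_first_integral
    (g₁ : ℝ → ℝ) (c₀ L₃ : ℝ)
    (hg₁ : ContDiff ℝ (⊤ : ℕ∞) g₁) (hg₁pos : ∀ t, 0 < g₁ t)
    (V : ℝ → ℝ → ℝ)
    (hV : ∀ t x, V t x
      = -(deriv (deriv g₁) t / (4 * g₁ t) - (deriv g₁ t) ^ 2 / (8 * (g₁ t) ^ 2)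
          - c₀ / (4 * (g₁ t) ^ 2)) * x ^ 2)
    (r : ℝ → ℝ) (hrpos : ∀ t, 0 < r t)
    (hr : Differentiable ℝ r) (hr' : Differentiable ℝ (deriv r))
    (heq : ∀ t, deriv (deriv r) t
      = L₃ ^ 2 / (r t) ^ 3 - deriv (fun x => V t x) (r t)) :
    ∀ t₁ t₂,
      g₁ t₁ * ((deriv r t₁) ^ 2 + L₃ ^ 2 / (r t₁) ^ 2)
        - deriv g₁ t₁ * r t₁ * deriv r t₁
        + (deriv g₁ t₁) ^ 2 * (r t₁) ^ 2 / (4 * g₁ t₁)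
        + c₀ * (r t₁) ^ 2 / (2 * g₁ t₁)
      = g₁ t₂ * ((deriv r t₂) ^ 2 + L₃ ^ 2 / (r t₂) ^ 2)
        - deriv g₁ t₂ * r t₂ * deriv r t₂
        + (deriv g₁ t₂) ^ 2 * (r t₂) ^ 2 / (4 * g₁ t₂)
        + c₀ * (r t₂) ^ 2 / (2 * g₁ t₂) := by
  have hg1 : ContDiff ℝ ((⊤ : ℕ∞) : WithTop ℕ∞) g₁ := hg₁.of_le (by simp)
  have hgd : Differentiable ℝ g₁ := (contDiff_infty_iff_deriv.mp hg1).1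
  have hgd' : Differentiable ℝ (deriv g₁) :=
    (contDiff_infty_iff_deriv.mp (contDiff_infty_iff_deriv.mp hg1).2).1
  set I : ℝ → ℝ := fun t =>
    g₁ t * ((deriv r t) ^ 2 + L₃ ^ 2 / (r t) ^ 2)
      - deriv g₁ t * r t * deriv r t
      + (deriv g₁ t) ^ 2 * (r t) ^ 2 / (4 * g₁ t)
      + c₀ * (r t) ^ 2 / (2 * g₁ t) with hIdef
  suffices h : ∀ t, HasDerivAt I 0 t by
    intro t₁ t₂
    exact is_const_of_deriv_eq_zero (fun t => (h t).differentiableAt)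
      (fun t => (h t).deriv) t₁ t₂
  intro t
  have gne : g₁ t ≠ 0 := (hg₁pos t).ne'
  have rne : r t ≠ 0 := (hrpos t).ne'
  have hg : HasDerivAt g₁ (deriv g₁ t) t :=
    (hgd t).hasDerivAt
  have hg' : HasDerivAt (deriv g₁) (deriv (deriv g₁) t) t :=
    (hgd' t).hasDerivAt
  have hr0 : HasDerivAt r (deriv r t) t := (hr t).hasDerivAt
  have hr1 : HasDerivAt (deriv r) (deriv (deriv r) t) t := (hr' t).hasDerivAt
  set C : ℝ := -(deriv (deriv g₁) t / (4 * g₁ t) - (deriv g₁ t) ^ 2 / (8 * (g₁ t) ^ 2)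
      - c₀ / (4 * (g₁ t) ^ 2)) with hC
  have hVd : deriv (fun x => V t x) (r t) = C * (2 * r t) := by
    have h1 : (fun x => V t x) = fun x => C * x ^ 2 := funext fun x => hV t x
    rw [h1]
    have := ((hasDerivAt_pow 2 (r t)).const_mul C).deriv
    simpa using this
  have hrr : deriv (deriv r) t = L₃ ^ 2 / (r t) ^ 3 - C * (2 * r t) := by
    rw [heq t, hVd]
  -- build derivative
  have h1 : HasDerivAt (fun t => (deriv r t) ^ 2 + L₃ ^ 2 / (r t) ^ 2)
      (2 * deriv r t * deriv (deriv r) t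
        + (0 * (r t) ^ 2 - L₃ ^ 2 * (2 * r t * deriv r t)) / ((r t) ^ 2) ^ 2) t := by
    have := (hr1.pow 2).add ((hasDerivAt_const t (L₃ ^ 2)).div (hr0.pow 2)
      (pow_ne_zero 2 rne))
    simpa [Pi.pow_def, Pi.add_def, Pi.div_def, Pi.mul_def, mul_comm, mul_assoc, mul_left_comm] using this
  have h2 : HasDerivAt (fun t => g₁ t * ((deriv r t) ^ 2 + L₃ ^ 2 / (r t) ^ 2))
      (deriv g₁ t * ((deriv r t) ^ 2 + L₃ ^ 2 / (r t) ^ 2)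
        + g₁ t * (2 * deriv r t * deriv (deriv r) t
          + (0 * (r t) ^ 2 - L₃ ^ 2 * (2 * r t * deriv r t)) / ((r t) ^ 2) ^ 2)) t :=
    hg.mul h1
  have h3 : HasDerivAt (fun t => deriv g₁ t * r t * deriv r t)
      ((deriv (deriv g₁) t * r t + deriv g₁ t * deriv r t) * deriv r t
        + deriv g₁ t * r t * deriv (deriv r) t) t :=
    (hg'.mul hr0).mul hr1
  have h4 : HasDerivAt (fun t => (deriv g₁ t) ^ 2 * (r t) ^ 2 / (4 * g₁ t))
      (((2 * deriv g₁ t * deriv (deriv g₁) t * (r t) ^ 2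
          + (deriv g₁ t) ^ 2 * (2 * r t * deriv r t)) * (4 * g₁ t)
        - (deriv g₁ t) ^ 2 * (r t) ^ 2 * (4 * deriv g₁ t)) / (4 * g₁ t) ^ 2) t := by
    have := ((hg'.pow 2).mul (hr0.pow 2)).div (hg.const_mul 4)
      (by simpa using gne)
    simpa [Pi.pow_def, Pi.add_def, Pi.div_def, Pi.mul_def, mul_comm, mul_assoc, mul_left_comm] using this
  have h5 : HasDerivAt (fun t => c₀ * (r t) ^ 2 / (2 * g₁ t))
      ((c₀ * (2 * r t * deriv r t) * (2 * g₁ t)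
        - c₀ * (r t) ^ 2 * (2 * deriv g₁ t)) / (2 * g₁ t) ^ 2) t := by
    have := ((hr0.pow 2).const_mul c₀).div (hg.const_mul 2)
      (by simpa using gne)
    simpa [Pi.pow_def, Pi.add_def, Pi.div_def, Pi.mul_def, mul_comm, mul_assoc, mul_left_comm] using this
  have hI : HasDerivAt I
      (deriv g₁ t * ((deriv r t) ^ 2 + L₃ ^ 2 / (r t) ^ 2)
        + g₁ t * (2 * deriv r t * deriv (deriv r) t
          + (0 * (r t) ^ 2 - L₃ ^ 2 * (2 * r t * deriv r t)) / ((r t) ^ 2) ^ 2)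
       - ((deriv (deriv g₁) t * r t + deriv g₁ t * deriv r t) * deriv r t
          + deriv g₁ t * r t * deriv (deriv r) t)
       + ((2 * deriv g₁ t * deriv (deriv g₁) t * (r t) ^ 2
            + (deriv g₁ t) ^ 2 * (2 * r t * deriv r t)) * (4 * g₁ t)
          - (deriv g₁ t) ^ 2 * (r t) ^ 2 * (4 * deriv g₁ t)) / (4 * g₁ t) ^ 2
       + ((c₀ * (2 * r t * deriv r t) * (2 * g₁ t)
          - c₀ * (r t) ^ 2 * (2 * deriv g₁ t)) / (2 * g₁ t) ^ 2)) t :=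
    ((h2.sub h3).add h4).add h5
  have hzero :
      (deriv g₁ t * ((deriv r t) ^ 2 + L₃ ^ 2 / (r t) ^ 2)
        + g₁ t * (2 * deriv r t * deriv (deriv r) t
          + (0 * (r t) ^ 2 - L₃ ^ 2 * (2 * r t * deriv r t)) / ((r t) ^ 2) ^ 2)
       - ((deriv (deriv g₁) t * r t + deriv g₁ t * deriv r t) * deriv r t
          + deriv g₁ t * r t * deriv (deriv r) t)
       + ((2 * deriv g₁ t * deriv (deriv g₁) t * (r t) ^ 2
            + (deriv g₁ t) ^ 2 * (2 * r t * deriv r t)) * (4 * g₁ t)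
          - (deriv g₁ t) ^ 2 * (r t) ^ 2 * (4 * deriv g₁ t)) / (4 * g₁ t) ^ 2
       + ((c₀ * (2 * r t * deriv r t) * (2 * g₁ t)
          - c₀ * (r t) ^ 2 * (2 * deriv g₁ t)) / (2 * g₁ t) ^ 2)) = 0 := by
    rw [hrr, hC]
    field_simp
    ring
  rw [hzero] at hI
  exact hI
end

section
/- Let φ : ℝ → ℝ be smooth and positive, K ∈ ℝ, and L₃ ∈ ℝ. Suppose r(t) > 0 solves r'' = L₃²/r³ − λ(t) r where λ(t) = K/φ⁴ − φ''/φ. Then I(t) = (1/2)(φ r' − φ' r)² + L₃² φ²/(2r²) + K r²/(2φ²) is constant in t. -/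
/-- Case I oscillator of Leach: for `λ(t) = K/φ⁴ − φ''/φ` the radial motion
`r'' = L₃²/r³ − λ r` admits the first integral
`I = (1/2)(φ r' − φ' r)² + L₃²φ²/(2r²) + K r²/(2φ²)`. -/
theorem leach_case_I_oscillator
    (φ : ℝ → ℝ) (K L₃ : ℝ)
    (hφ : ContDiff ℝ (⊤ : ℕ∞) φ) (hφpos : ∀ t, 0 < φ t)
    (r : ℝ → ℝ) (hrpos : ∀ t, 0 < r t)
    (hr : Differentiable ℝ r) (hr' : Differentiable ℝ (deriv r))
    (heq : ∀ t, deriv (deriv r) t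
      = L₃ ^ 2 / (r t) ^ 3 - (K / (φ t) ^ 4 - deriv (deriv φ) t / φ t) * r t) :
    ∀ t₁ t₂,
      (1 / 2) * (φ t₁ * deriv r t₁ - deriv φ t₁ * r t₁) ^ 2
        + L₃ ^ 2 * (φ t₁) ^ 2 / (2 * (r t₁) ^ 2) + K * (r t₁) ^ 2 / (2 * (φ t₁) ^ 2)
      = (1 / 2) * (φ t₂ * deriv r t₂ - deriv φ t₂ * r t₂) ^ 2
        + L₃ ^ 2 * (φ t₂) ^ 2 / (2 * (r t₂) ^ 2) + K * (r t₂) ^ 2 / (2 * (φ t₂) ^ 2) := by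
  have hφ' : ContDiff ℝ ((⊤ : ℕ∞) : WithTop ℕ∞) (deriv φ) := (contDiff_infty_iff_deriv.mp (hφ.of_le (by simp))).2
  set F : ℝ → ℝ := fun t =>
      (1 / 2) * (φ t * deriv r t - deriv φ t * r t) ^ 2
        + L₃ ^ 2 * (φ t) ^ 2 / (2 * (r t) ^ 2) + K * (r t) ^ 2 / (2 * (φ t) ^ 2) with hF
  have key : ∀ t, HasDerivAt F 0 t := by
    intro t
    have hφd : HasDerivAt φ (deriv φ t) t := (hφ.differentiable (by simp) t).hasDerivAt
    have hφ'd : HasDerivAt (deriv φ) (deriv (deriv φ) t) t :=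
      (hφ'.differentiable (by simp) t).hasDerivAt
    have hrd : HasDerivAt r (deriv r t) t := (hr t).hasDerivAt
    have hr'd : HasDerivAt (deriv r) (deriv (deriv r) t) t := (hr' t).hasDerivAt
    have hrne : r t ≠ 0 := (hrpos t).ne'
    have hφne : φ t ≠ 0 := (hφpos t).ne'
    -- build the derivative of each summand
    have h1 : HasDerivAt (fun t => (1 / 2) * (φ t * deriv r t - deriv φ t * r t) ^ 2)
        ((1 / 2) * (2 * (φ t * deriv r t - deriv φ t * r t) ^ 1 *
          ((deriv φ t * deriv r t + φ t * deriv (deriv r) t)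
            - (deriv (deriv φ) t * r t + deriv φ t * deriv r t)))) t := by
      exact (((hφd.mul hr'd).sub (hφ'd.mul hrd)).pow 2).const_mul _
    have h2 : HasDerivAt (fun t => L₃ ^ 2 * (φ t) ^ 2 / (2 * (r t) ^ 2))
        (((L₃ ^ 2 * (2 * (φ t) ^ 1 * deriv φ t)) * (2 * (r t) ^ 2)
          - L₃ ^ 2 * (φ t) ^ 2 * (2 * (2 * (r t) ^ 1 * deriv r t))) / (2 * (r t) ^ 2) ^ 2) t := by
      exact ((hφd.pow 2).const_mul _).div ((hrd.pow 2).const_mul 2)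
        (by positivity)
    have h3 : HasDerivAt (fun t => K * (r t) ^ 2 / (2 * (φ t) ^ 2))
        (((K * (2 * (r t) ^ 1 * deriv r t)) * (2 * (φ t) ^ 2)
          - K * (r t) ^ 2 * (2 * (2 * (φ t) ^ 1 * deriv φ t))) / (2 * (φ t) ^ 2) ^ 2) t := by
      exact ((hrd.pow 2).const_mul _).div ((hφd.pow 2).const_mul 2)
        (by positivity)
    have h := (h1.add h2).add h3
    convert h using 1
    case e'_4 => rfl
    case e'_5 => rfl
    case e'_8 => rfl
    rw [heq t]
    field_simp
    ring
  intro t₁ t₂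
  exact is_const_of_deriv_eq_zero (fun x => (key x).differentiableAt)
    (fun x => (key x).deriv) t₁ t₂
end

section
/- Let φ : ℝ → ℝ be smooth and positive, F̄ : ℝ → ℝ differentiable, and L₃ ∈ ℝ. Define V(t,r) = −(φ''/(2φ)) r² + φ^{-2} F̄(r/φ). Then for any solution r(t) > 0 of r'' = L₃²/r³ − ∂V/∂r(t, r(t)), the quantity I(t) = (1/2)(φ r' − r φ')² + L₃² φ²/(2 r²) + F̄(r/φ) is constant. -/
/-- Case III potentials of Leach: `V(t,r) = −(φ''/(2φ)) r² + φ⁻² F̄(r/φ)` admit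
the quadratic first integral
`I = (1/2)(φ r' − r φ')² + L₃²φ²/(2r²) + F̄(r/φ)`. -/
theorem leach_case_III_first_integral
    (φ : ℝ → ℝ) (Fbar : ℝ → ℝ) (L₃ : ℝ)
    (hφ : ContDiff ℝ (⊤ : ℕ∞) φ) (hφpos : ∀ t, 0 < φ t)
    (hFbar : Differentiable ℝ Fbar)
    (V : ℝ → ℝ → ℝ)
    (hV : ∀ t x, V t x
      = -(deriv (deriv φ) t / (2 * φ t)) * x ^ 2 + (φ t) ^ (-2 : ℤ) * Fbar (x / φ t))
    (r : ℝ → ℝ) (hrpos : ∀ t, 0 < r t)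
    (hr : Differentiable ℝ r) (hr' : Differentiable ℝ (deriv r))
    (heq : ∀ t, deriv (deriv r) t
      = L₃ ^ 2 / (r t) ^ 3 - deriv (fun x => V t x) (r t)) :
    ∀ t₁ t₂,
      (1 / 2) * (φ t₁ * deriv r t₁ - r t₁ * deriv φ t₁) ^ 2
        + L₃ ^ 2 * (φ t₁) ^ 2 / (2 * (r t₁) ^ 2) + Fbar (r t₁ / φ t₁)
      = (1 / 2) * (φ t₂ * deriv r t₂ - r t₂ * deriv φ t₂) ^ 2
        + L₃ ^ 2 * (φ t₂) ^ 2 / (2 * (r t₂) ^ 2) + Fbar (r t₂ / φ t₂) := by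
  have hφd : Differentiable ℝ φ := hφ.differentiable (by simp)
  have hphitop : ContDiff ℝ ((⊤ : ℕ∞) : WithTop ℕ∞) φ := hφ.of_le (by simp)
  have hφ'd : Differentiable ℝ (deriv φ) :=
    ((contDiff_infty_iff_deriv.mp hphitop).2).differentiable (by simp)
  have hφne : ∀ t, φ t ≠ 0 := fun t => (hφpos t).ne'
  have hrne : ∀ t, r t ≠ 0 := fun t => (hrpos t).ne'
  -- derivative of V in x
  have hdV : ∀ t, deriv (fun x => V t x) (r t)
      = -(deriv (deriv φ) t / (2 * φ t)) * (2 * r t)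
        + (φ t) ^ (-2 : ℤ) * (deriv Fbar (r t / φ t) * (φ t)⁻¹) := by
    intro t
    have hfun : (fun x => V t x)
        = fun x => -(deriv (deriv φ) t / (2 * φ t)) * x ^ 2
            + (φ t) ^ (-2 : ℤ) * Fbar (x / φ t) := funext (hV t)
    rw [hfun]
    have h1 : HasDerivAt (fun x : ℝ => -(deriv (deriv φ) t / (2 * φ t)) * x ^ 2)
        (-(deriv (deriv φ) t / (2 * φ t)) * (2 * r t)) (r t) := by
      simpa using (hasDerivAt_pow 2 (r t)).const_mul (-(deriv (deriv φ) t / (2 * φ t)))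
    have hinner : HasDerivAt (fun x : ℝ => x / φ t) ((φ t)⁻¹) (r t) := by
      simpa using (hasDerivAt_id (r t)).div_const (φ t)
    have h2 : HasDerivAt (fun x : ℝ => (φ t) ^ (-2 : ℤ) * Fbar (x / φ t))
        ((φ t) ^ (-2 : ℤ) * (deriv Fbar (r t / φ t) * (φ t)⁻¹)) (r t) :=
      (((hFbar (r t / φ t)).hasDerivAt.comp (r t) hinner)).const_mul _
    exact (h1.add h2).deriv
  -- the first integral
  set E : ℝ → ℝ := fun t =>
    (1 / 2) * (φ t * deriv r t - r t * deriv φ t) ^ 2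
      + L₃ ^ 2 * (φ t) ^ 2 / (2 * (r t) ^ 2) + Fbar (r t / φ t) with hE
  have key : ∀ t, HasDerivAt E 0 t := by
    intro t
    have hφt : HasDerivAt φ (deriv φ t) t := (hφd t).hasDerivAt
    have hφ't : HasDerivAt (deriv φ) (deriv (deriv φ) t) t := (hφ'd t).hasDerivAt
    have hrt : HasDerivAt r (deriv r t) t := (hr t).hasDerivAt
    have hr't : HasDerivAt (deriv r) (deriv (deriv r) t) t := (hr' t).hasDerivAt
    have hA := (((hφt.mul hr't).sub (hrt.mul hφ't)).pow 2).const_mul (1 / 2 : ℝ)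
    have hB : HasDerivAt (fun t => L₃ ^ 2 * (φ t) ^ 2 / (2 * (r t) ^ 2))
        ((L₃ ^ 2 * (2 * φ t * deriv φ t) * (2 * (r t) ^ 2)
          - L₃ ^ 2 * (φ t) ^ 2 * (2 * (2 * r t * deriv r t))) / (2 * (r t) ^ 2) ^ 2) t := by
      have hnum := (hφt.pow 2).const_mul (L₃ ^ 2)
      have hden := (hrt.pow 2).const_mul (2 : ℝ)
      have hdne : (2 : ℝ) * r t ^ 2 ≠ 0 := by
        have := hrpos t; positivity
      have := hnum.div hden hdne
      convert this using 1
      · rfl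
      · rfl
      · rfl
      · simp only [Pi.pow_apply]; push_cast; ring
    have hq : HasDerivAt (fun t => r t / φ t)
        ((deriv r t * φ t - r t * deriv φ t) / (φ t) ^ 2) t := hrt.div hφt (hφne t)
    have hC : HasDerivAt (fun t => Fbar (r t / φ t))
        (deriv Fbar (r t / φ t) * ((deriv r t * φ t - r t * deriv φ t) / (φ t) ^ 2)) t :=
      (hFbar (r t / φ t)).hasDerivAt.comp t hq
    have hsum := (hA.add hB).add hC
    have hr'' : deriv (deriv r) t
        = L₃ ^ 2 / (r t) ^ 3
          - (-(deriv (deriv φ) t / (2 * φ t)) * (2 * r t)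
            + (φ t) ^ (-2 : ℤ) * (deriv Fbar (r t / φ t) * (φ t)⁻¹)) := by
      rw [heq t, hdV t]
    convert hsum using 1
    · rfl
    · rfl
    · rfl
    rw [hr'']
    have h1 := hφne t
    have h2 := hrne t
    simp only [zpow_neg, zpow_two, Pi.mul_apply, Pi.sub_apply, Pi.pow_apply]
    field_simp
    ring
  have hdiff : Differentiable ℝ E := fun t => (key t).differentiableAt
  have hz : ∀ t, deriv E t = 0 := fun t => (key t).deriv
  intro t₁ t₂
  exact is_const_of_deriv_eq_zero hdiff hz t₁ t₂
end

section
/- Let ν ≠ 0, k, b₀, b₁, b₂ be real constants, set φ(t) = √(b₀ + b₁t + b₂t²) on an interval where b₀ + b₁t + b₂t² > 0, and ω_ν(t) = k (b₀ + b₁t + b₂t²)^{(ν−2)/2}. Suppose r(t) > 0, θ(t) solve the central motion equations with potential V(t,r) = −ω_ν(t)/r^ν, i.e. r'' = r(θ')² − ν ω_ν(t) r^{−ν−1} and r²θ' = L₃ constant. Then J(t) = (b₀+b₁t+b₂t²)[ (1/2)((r')² + r²(θ')²) − ω_ν/r^ν ] − ((b₁+2b₂t)/2) r r' + b₂ r²/2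 is constant. -/
/-- The integrable time-dependent generalized Kepler potential
`V = −ω_ν(t)/r^ν` with `ω_ν = k (b₀+b₁t+b₂t²)^{(ν−2)/2}` admits the quadratic
first integral `J`. -/
theorem generalized_kepler_first_integral
    (ν k b₀ b₁ b₂ L₃ : ℝ) (hν : ν ≠ 0)
    (hP : ∀ t : ℝ, 0 < b₀ + b₁ * t + b₂ * t ^ 2)
    (ω : ℝ → ℝ)
    (hω : ∀ t, ω t = k * (b₀ + b₁ * t + b₂ * t ^ 2) ^ ((ν - 2) / 2))
    (r θ : ℝ → ℝ) (hrpos : ∀ t, 0 < r t)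
    (hr : Differentiable ℝ r) (hr' : Differentiable ℝ (deriv r))
    (hθ : Differentiable ℝ θ)
    (heq : ∀ t, deriv (deriv r) t
      = r t * (deriv θ t) ^ 2 - ν * ω t * (r t) ^ (-ν - 1))
    (hang : ∀ t, (r t) ^ 2 * deriv θ t = L₃) :
    ∀ t₁ t₂,
      (b₀ + b₁ * t₁ + b₂ * t₁ ^ 2)
          * ((1 / 2) * ((deriv r t₁) ^ 2 + (r t₁) ^ 2 * (deriv θ t₁) ^ 2)
             - ω t₁ / (r t₁) ^ ν)
        - ((b₁ + 2 * b₂ * t₁) / 2) * r t₁ * deriv r t₁ + b₂ * (r t₁) ^ 2 / 2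
      = (b₀ + b₁ * t₂ + b₂ * t₂ ^ 2)
          * ((1 / 2) * ((deriv r t₂) ^ 2 + (r t₂) ^ 2 * (deriv θ t₂) ^ 2)
             - ω t₂ / (r t₂) ^ ν)
        - ((b₁ + 2 * b₂ * t₂) / 2) * r t₂ * deriv r t₂ + b₂ * (r t₂) ^ 2 / 2 := by
  -- θ' = L₃ / r²
  have hθ' : ∀ t, deriv θ t = L₃ / (r t) ^ 2 := by
    intro t
    have h := hang t
    field_simp [pow_ne_zero 2 (hrpos t).ne'] at h ⊢
    rw [eq_div_iff (pow_ne_zero 2 (hrpos t).ne')]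
    linear_combination h
  set F : ℝ → ℝ := fun t =>
    (b₀ + b₁ * t + b₂ * t ^ 2)
        * ((1 / 2) * ((deriv r t) ^ 2 + L₃ ^ 2 / (r t) ^ 2)
           - k * (b₀ + b₁ * t + b₂ * t ^ 2) ^ ((ν - 2) / 2) * (r t) ^ (-ν))
      - ((b₁ + 2 * b₂ * t) / 2) * r t * deriv r t + b₂ * (r t) ^ 2 / 2 with hF
  have key : ∀ t, HasDerivAt F 0 t := by
    intro t
    have hR : r t ≠ 0 := (hrpos t).ne'
    have hp : b₀ + b₁ * t + b₂ * t ^ 2 ≠ 0 := (hP t).ne'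
    have hrt : HasDerivAt r (deriv r t) t := (hr t).hasDerivAt
    have hdrt : HasDerivAt (deriv r) (deriv (deriv r) t) t := (hr' t).hasDerivAt
    have hPd : HasDerivAt (fun s : ℝ => b₀ + b₁ * s + b₂ * s ^ 2)
        (b₁ + 2 * b₂ * t) t := by
      have h1 : HasDerivAt (fun s : ℝ => b₀ + b₁ * s + b₂ * s ^ 2)
          (0 + b₁ * 1 + b₂ * (↑2 * t ^ 1)) t := by
        exact ((hasDerivAt_const t b₀).add ((hasDerivAt_id t).const_mul b₁)).add
          ((hasDerivAt_pow 2 t).const_mul b₂)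
      convert h1 using 1; push_cast; ring
    have hPe : HasDerivAt (fun s : ℝ => (b₀ + b₁ * s + b₂ * s ^ 2) ^ ((ν - 2) / 2))
        ((b₁ + 2 * b₂ * t) * ((ν - 2) / 2)
          * (b₀ + b₁ * t + b₂ * t ^ 2) ^ ((ν - 2) / 2 - 1)) t :=
      hPd.rpow_const (Or.inl hp)
    have hre : HasDerivAt (fun s : ℝ => (r s) ^ (-ν))
        (deriv r t * -ν * (r t) ^ (-ν - 1)) t := hrt.rpow_const (Or.inl hR)
    have hinv : HasDerivAt (fun s : ℝ => L₃ ^ 2 / (r s) ^ 2)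
        ((0 * (r t) ^ 2 - L₃ ^ 2 * (↑2 * (r t) ^ 1 * deriv r t)) / ((r t) ^ 2) ^ 2) t :=
      (hasDerivAt_const t (L₃ ^ 2)).div (hrt.pow 2) (pow_ne_zero 2 hR)
    have hPd2 : HasDerivAt (fun s : ℝ => (b₁ + 2 * b₂ * s) / 2) b₂ t := by
      have h1 : HasDerivAt (fun s : ℝ => b₁ + 2 * b₂ * s) (2 * b₂) t := by
        simpa using ((hasDerivAt_id t).const_mul (2 * b₂)).const_add b₁
      simpa using h1.div_const 2
    have hd := ((hPd.mul ((((hdrt.pow 2).add hinv).const_mul (1/2)).sub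
        ((hPe.const_mul k).mul hre))).sub
        ((hPd2.mul hrt).mul hdrt)).add
        (((hrt.pow 2).const_mul b₂).div_const 2)
    convert hd using 1
    · rfl
    · rfl
    · rfl
    simp only [Pi.mul_apply, Pi.add_apply, Pi.sub_apply, Pi.pow_apply]
    rw [heq t, hθ' t, hω t]
    have e1 : (r t) ^ (-ν - 1) = (r t) ^ (-ν) / r t := Real.rpow_sub_one hR (-ν)
    have e2 : (b₀ + b₁ * t + b₂ * t ^ 2) ^ ((ν - 2) / 2 - 1)
        = (b₀ + b₁ * t + b₂ * t ^ 2) ^ ((ν - 2) / 2)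
          / (b₀ + b₁ * t + b₂ * t ^ 2) := Real.rpow_sub_one hp _
    rw [e1, e2]
    set A := (r t) ^ (-ν)
    set C := (b₀ + b₁ * t + b₂ * t ^ 2) ^ ((ν - 2) / 2)
    field_simp
    ring
  have hdiff : Differentiable ℝ F := fun t => (key t).differentiableAt
  have hconst : ∀ t₁ t₂, F t₁ = F t₂ := fun t₁ t₂ =>
    is_const_of_deriv_eq_zero hdiff (fun t => (key t).deriv) t₁ t₂
  intro t₁ t₂
  have conv : ∀ t,
      (b₀ + b₁ * t + b₂ * t ^ 2)
          * ((1 / 2) * ((deriv r t) ^ 2 + (r t) ^ 2 * (deriv θ t) ^ 2)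
             - ω t / (r t) ^ ν)
        - ((b₁ + 2 * b₂ * t) / 2) * r t * deriv r t + b₂ * (r t) ^ 2 / 2 = F t := by
    intro t
    simp only [hF]
    rw [hθ' t, hω t]
    have e3 : (r t) ^ (-ν) = ((r t) ^ ν)⁻¹ := Real.rpow_neg (hrpos t).le ν
    have hR : r t ≠ 0 := (hrpos t).ne'
    have e4 : (r t) ^ 2 * (L₃ / (r t) ^ 2) ^ 2 = L₃ ^ 2 / (r t) ^ 2 := by
      rw [div_pow]
      rw [eq_div_iff (pow_ne_zero 2 hR)]
      field_simp
    rw [e3, e4]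
    ring
  rw [conv t₁, conv t₂]
  exact hconst t₁ t₂
end

section
/- Let φ be smooth and positive, k ≠ 0, L₃ ≠ 0 constants. Suppose r(t) > 0 solves r'' = L₃²/r³ − ∂V/∂r(t,r(t)) with V(t,r) = −(φ''/(2φ)) r² − (k/φ) r^{-1} − L₃²/(2r²), and let θ satisfy θ' = L₃/r². Let I = (1/2)(φ r' − φ' r)² − kφ/r (a constant by conservation). Assume φ r' − φ' r < 0 and I + kφ/r > 0 throughout. Then θ(t) = (L₃/k)·√(2(I + kφ(t)/r(t))) + θ₀ for some constant θ₀. -/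
/-- The orbit of the integrable central potential
`V = −(φ''/(2φ))r² − k/(φr) − L₃²/(2r²)`:
`θ = (L₃/k)√(2(I + kφ/r)) + θ₀`. -/
theorem orbit_of_special_potential
    (φ : ℝ → ℝ) (k L₃ : ℝ) (hk : k ≠ 0) (hL₃ : L₃ ≠ 0)
    (hφ : ContDiff ℝ (⊤ : ℕ∞) φ) (hφpos : ∀ t, 0 < φ t)
    (V : ℝ → ℝ → ℝ)
    (hV : ∀ t x, V t x
      = -(deriv (deriv φ) t / (2 * φ t)) * x ^ 2 - (k / φ t) * x⁻¹
        - L₃ ^ 2 / (2 * x ^ 2))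
    (r θ : ℝ → ℝ) (hrpos : ∀ t, 0 < r t)
    (hr : Differentiable ℝ r) (hr' : Differentiable ℝ (deriv r))
    (hθ : Differentiable ℝ θ)
    (heq : ∀ t, deriv (deriv r) t
      = L₃ ^ 2 / (r t) ^ 3 - deriv (fun x => V t x) (r t))
    (hθ' : ∀ t, deriv θ t = L₃ / (r t) ^ 2)
    (I : ℝ)
    (hI : ∀ t, (1 / 2) * (φ t * deriv r t - deriv φ t * r t) ^ 2
      - k * φ t / r t = I)
    (hsign : ∀ t, φ t * deriv r t - deriv φ t * r t < 0)
    (hpos : ∀ t, 0 < I + k * φ t / r t) :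
    ∃ θ₀ : ℝ, ∀ t,
      θ t = (L₃ / k) * Real.sqrt (2 * (I + k * φ t / r t)) + θ₀ := by
  have hphiInf : ContDiff ℝ ((⊤ : ℕ∞) : WithTop ℕ∞) φ := hφ.of_le (by simp)
  have hφ1 := (contDiff_infty_iff_deriv.mp hphiInf).2
  have hφdiff : Differentiable ℝ φ := hφ.differentiable (by simp)
  have hφdiff1 : Differentiable ℝ (deriv φ) := hφ1.differentiable (by simp)
  set g : ℝ → ℝ := fun t => θ t + (L₃ / k) * (φ t * deriv r t - deriv φ t * r t) with hg
  have key : ∀ t, HasDerivAt g 0 t := by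
    intro t
    have hrt : r t ≠ 0 := (hrpos t).ne'
    have hφt : φ t ≠ 0 := (hφpos t).ne'
    have h1 := (hasDerivAt_pow 2 (r t)).const_mul (-(deriv (deriv φ) t / (2 * φ t)))
    have h2 := (hasDerivAt_inv hrt).const_mul (k / φ t)
    have h3 := (hasDerivAt_const (r t) (L₃ ^ 2)).div
      ((hasDerivAt_pow 2 (r t)).const_mul 2)
      (by positivity : (2 : ℝ) * (r t) ^ 2 ≠ 0)
    have hVd := (h1.sub h2).sub h3
    have hfun : (fun x => V t x) = fun x : ℝ =>
        -(deriv (deriv φ) t / (2 * φ t)) * x ^ 2 - (k / φ t) * x⁻¹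
          - L₃ ^ 2 / (2 * x ^ 2) := by
      funext x; exact hV t x
    have hVderiv : deriv (fun x => V t x) (r t) =
        -(deriv (deriv φ) t / (2 * φ t)) * (↑2 * r t ^ 1)
          - (k / φ t) * (-(r t ^ 2)⁻¹)
          - (0 * (2 * r t ^ 2) - L₃ ^ 2 * (2 * (↑2 * r t ^ 1))) / (2 * r t ^ 2) ^ 2 := by
      rw [hfun]; exact hVd.deriv
    have hr'' : deriv (deriv r) t =
        deriv (deriv φ) t / φ t * r t - k / (φ t * r t ^ 2) := by
      rw [heq t, hVderiv]
      field_simp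
      ring
    have hθat : HasDerivAt θ (deriv θ t) t := (hθ t).hasDerivAt
    have hu : HasDerivAt (fun t => φ t * deriv r t - deriv φ t * r t)
        ((deriv φ t * deriv r t + φ t * deriv (deriv r) t)
          - (deriv (deriv φ) t * r t + deriv φ t * deriv r t)) t :=
      (((hφdiff t).hasDerivAt).mul ((hr' t).hasDerivAt)).sub
        (((hφdiff1 t).hasDerivAt).mul ((hr t).hasDerivAt))
    have hgd := hθat.add (hu.const_mul (L₃ / k))
    have hval : deriv θ t + L₃ / k *
        ((deriv φ t * deriv r t + φ t * deriv (deriv r) t)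
          - (deriv (deriv φ) t * r t + deriv φ t * deriv r t)) = 0 := by
      rw [hθ' t, hr'']
      field_simp
      ring
    rw [hval] at hgd
    exact hgd
  have hgdiff : Differentiable ℝ g := fun t => (key t).differentiableAt
  have hgderiv : ∀ t, deriv g t = 0 := fun t => (key t).deriv
  refine ⟨g 0, fun t => ?_⟩
  have hconst : g t = g 0 := is_const_of_deriv_eq_zero hgdiff hgderiv t 0
  have hsq : Real.sqrt (2 * (I + k * φ t / r t))
      = -(φ t * deriv r t - deriv φ t * r t) := by
    have h2 : 2 * (I + k * φ t / r t)
        = (-(φ t * deriv r t - deriv φ t * r t)) ^ 2 := by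
      have := hI t; nlinarith [this]
    rw [h2, Real.sqrt_sq (by linarith [hsign t])]
  rw [hsq]
  simp only [hg] at hconst
  linear_combination hconst
end

section
/- Let b₀, b₁, b₂, k, G be constants with b₀+b₁t+b₂t² > 0 on an interval, set m(t) = 1/√(b₀+b₁t+b₂t²). Suppose r(t) > 0 solves r'' = L₃²/r³ − G m(t)/r² (the radial equation of the two-body problem with the time-dependent Kepler potential V = −G m(t)/r). Then J(t) = (b₀+b₁t+b₂t²)[ (1/2)(r')² + L₃²/(2r²) − G m(t)/r ] − ((b₁+2b₂t)/2) r r' + b₂ r²/2 is constant. -/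
/-- The time-dependent Kepler problem with total mass
`m(t) = (b₀+b₁t+b₂t²)^{-1/2}` admits the quadratic first integral `J`. -/
theorem variable_mass_kepler_first_integral
    (b₀ b₁ b₂ k G L₃ : ℝ)
    (hP : ∀ t : ℝ, 0 < b₀ + b₁ * t + b₂ * t ^ 2)
    (m : ℝ → ℝ)
    (hm : ∀ t, m t = 1 / Real.sqrt (b₀ + b₁ * t + b₂ * t ^ 2))
    (r : ℝ → ℝ) (hrpos : ∀ t, 0 < r t)
    (hr : Differentiable ℝ r) (hr' : Differentiable ℝ (deriv r))
    (heq : ∀ t, deriv (deriv r) t = L₃ ^ 2 / (r t) ^ 3 - G * m t / (r t) ^ 2) :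
    ∀ t₁ t₂,
      (b₀ + b₁ * t₁ + b₂ * t₁ ^ 2)
          * ((1 / 2) * (deriv r t₁) ^ 2 + L₃ ^ 2 / (2 * (r t₁) ^ 2)
             - G * m t₁ / r t₁)
        - ((b₁ + 2 * b₂ * t₁) / 2) * r t₁ * deriv r t₁ + b₂ * (r t₁) ^ 2 / 2
      = (b₀ + b₁ * t₂ + b₂ * t₂ ^ 2)
          * ((1 / 2) * (deriv r t₂) ^ 2 + L₃ ^ 2 / (2 * (r t₂) ^ 2)
             - G * m t₂ / r t₂)
        - ((b₁ + 2 * b₂ * t₂) / 2) * r t₂ * deriv r t₂ + b₂ * (r t₂) ^ 2 / 2 := by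
  have hmf : m = fun t => (Real.sqrt (b₀ + b₁ * t + b₂ * t ^ 2))⁻¹ := by
    funext t; rw [hm]; simp [one_div]
  subst hmf
  set J : ℝ → ℝ := fun t =>
      (b₀ + b₁ * t + b₂ * t ^ 2)
          * ((1 / 2) * (deriv r t) ^ 2 + L₃ ^ 2 / (2 * (r t) ^ 2)
             - G * (Real.sqrt (b₀ + b₁ * t + b₂ * t ^ 2))⁻¹ / r t)
        - ((b₁ + 2 * b₂ * t) / 2) * r t * deriv r t + b₂ * (r t) ^ 2 / 2 with hJdef
  have key : ∀ t, HasDerivAt J 0 t := by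
    intro t
    have hrt : HasDerivAt r (deriv r t) t := (hr t).hasDerivAt
    have hrt' : HasDerivAt (deriv r) (deriv (deriv r) t) t := (hr' t).hasDerivAt
    have hrne : r t ≠ 0 := (hrpos t).ne'
    have hPt : (0:ℝ) < b₀ + b₁ * t + b₂ * t ^ 2 := hP t
    have hsne : Real.sqrt (b₀ + b₁ * t + b₂ * t ^ 2) ≠ 0 :=
      (Real.sqrt_pos.mpr hPt).ne'
    have hPder : HasDerivAt (fun t => b₀ + b₁ * t + b₂ * t ^ 2) (b₁ + 2 * b₂ * t) t := by
      have h := ((hasDerivAt_const t b₀).add ((hasDerivAt_id t).const_mul b₁)).add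
        ((hasDerivAt_pow 2 t).const_mul b₂)
      refine h.congr_deriv ?_
      push_cast
      ring
    have hsqrt : HasDerivAt (fun t => Real.sqrt (b₀ + b₁ * t + b₂ * t ^ 2))
        (1 / (2 * Real.sqrt (b₀ + b₁ * t + b₂ * t ^ 2)) * (b₁ + 2 * b₂ * t)) t :=
      (Real.hasDerivAt_sqrt hPt.ne').comp t hPder
    have hminv : HasDerivAt (fun t => (Real.sqrt (b₀ + b₁ * t + b₂ * t ^ 2))⁻¹)
        (-(1 / (2 * Real.sqrt (b₀ + b₁ * t + b₂ * t ^ 2)) * (b₁ + 2 * b₂ * t))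
          / (Real.sqrt (b₀ + b₁ * t + b₂ * t ^ 2)) ^ 2) t := hsqrt.inv hsne
    have h1 : HasDerivAt (fun t => (1 / 2) * (deriv r t) ^ 2)
        ((1/2) * ((2:ℕ) * (deriv r t) ^ 1 * deriv (deriv r) t)) t :=
      (hrt'.pow 2).const_mul (1/2)
    have hden : HasDerivAt (fun t => 2 * (r t) ^ 2)
        (2 * ((2:ℕ) * (r t) ^ 1 * deriv r t)) t := (hrt.pow 2).const_mul 2
    have hdenne : 2 * (r t) ^ 2 ≠ 0 := by positivity
    have h2 : HasDerivAt (fun t => L₃ ^ 2 / (2 * (r t) ^ 2))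
        ((0 * (2 * (r t) ^ 2) - L₃ ^ 2 * (2 * ((2:ℕ) * (r t) ^ 1 * deriv r t)))
          / (2 * (r t) ^ 2) ^ 2) t :=
      (hasDerivAt_const t (L₃ ^ 2)).div hden hdenne
    have h3 : HasDerivAt (fun t => G * (Real.sqrt (b₀ + b₁ * t + b₂ * t ^ 2))⁻¹ / r t)
        ((G * (-(1 / (2 * Real.sqrt (b₀ + b₁ * t + b₂ * t ^ 2)) * (b₁ + 2 * b₂ * t))
          / (Real.sqrt (b₀ + b₁ * t + b₂ * t ^ 2)) ^ 2) * r t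
          - G * (Real.sqrt (b₀ + b₁ * t + b₂ * t ^ 2))⁻¹ * deriv r t) / (r t) ^ 2) t :=
      (hminv.const_mul G).div hrt hrne
    have hE := (h1.add h2).sub h3
    have hJ1 := hPder.mul hE
    have hQ : HasDerivAt (fun t => (b₁ + 2 * b₂ * t) / 2) ((2 * b₂ * 1) / 2) t := by
      exact (((hasDerivAt_id t).const_mul (2 * b₂)).const_add b₁).div_const 2
    have hJ2 := (hQ.mul hrt).mul hrt'
    have hJ3 := ((hrt.pow 2).const_mul b₂).div_const 2
    have hJtot := (hJ1.sub hJ2).add hJ3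
    rw [hJdef]
    refine hJtot.congr_deriv ?_
    rw [heq t, hm t]
    simp only [Pi.add_apply, Pi.sub_apply, Pi.mul_apply]
    set s := Real.sqrt (b₀ + b₁ * t + b₂ * t ^ 2) with hs
    have hs2 : b₀ + b₁ * t + b₂ * t ^ 2 = s ^ 2 := (Real.sq_sqrt hPt.le).symm
    rw [hs2]
    have hspos : 0 < s := Real.sqrt_pos.mpr hPt
    field_simp
    ring
  intro t₁ t₂
  exact is_const_of_deriv_eq_zero (fun t => (key t).differentiableAt)
    (fun t => (key t).deriv) t₁ t₂
end

section
/- Let b₀, b₁, b₂, k be real constants with P(t) = b₀+b₁t+b₂t² > 0 on an interval, and define the time-dependent Yukawa potential V(t,r) = (k/√P(t)) e^{−r/√P(t)} / r. Let L₃ ∈ ℝ and suppose r(t) > 0 solves r'' = L₃²/r³ − ∂V/∂r(t, r(t)). Then I(t) = P(t)( (r')² + L₃²/r² ) − P'(t) r r' − ((b₁²−4b₂b₀)/(4P)) r² + ((P')²/(4P)) r² + (2k/(P^{-1/2} r)) e^{−r/√P} is constant. -/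
private noncomputable def yukawaJ (b₁ b₂ k L₃ : ℝ) (P r : ℝ → ℝ) : ℝ → ℝ := fun u =>
  P u * ((deriv r u) ^ 2 + L₃ ^ 2 / (r u) ^ 2)
    - (b₁ + 2 * b₂ * u) * r u * deriv r u
    + b₂ * (r u) ^ 2
    + 2 * k * Real.sqrt (P u) / r u * Real.exp (-r u / Real.sqrt (P u))

/-- The time-dependent Yukawa potential
`V = (k/√P) e^{−r/√P}/r` with `P(t) = b₀+b₁t+b₂t²` is integrable: the stated
quadratic quantity `I` is a first integral of the reduced radial motion. -/
theorem yukawa_first_integral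
    (b₀ b₁ b₂ k L₃ : ℝ)
    (P : ℝ → ℝ) (hPdef : ∀ t, P t = b₀ + b₁ * t + b₂ * t ^ 2)
    (hP : ∀ t, 0 < P t)
    (V : ℝ → ℝ → ℝ)
    (hV : ∀ t x, V t x
      = (k / Real.sqrt (P t)) * Real.exp (-x / Real.sqrt (P t)) / x)
    (r : ℝ → ℝ) (hrpos : ∀ t, 0 < r t)
    (hr : Differentiable ℝ r) (hr' : Differentiable ℝ (deriv r))
    (heq : ∀ t, deriv (deriv r) t
      = L₃ ^ 2 / (r t) ^ 3 - deriv (fun x => V t x) (r t)) :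
    ∀ t₁ t₂,
      P t₁ * ((deriv r t₁) ^ 2 + L₃ ^ 2 / (r t₁) ^ 2)
        - deriv P t₁ * r t₁ * deriv r t₁
        - ((b₁ ^ 2 - 4 * b₂ * b₀) / (4 * P t₁)) * (r t₁) ^ 2
        + ((deriv P t₁) ^ 2 / (4 * P t₁)) * (r t₁) ^ 2
        + (2 * k / (r t₁ / Real.sqrt (P t₁))) * Real.exp (-r t₁ / Real.sqrt (P t₁))
      = P t₂ * ((deriv r t₂) ^ 2 + L₃ ^ 2 / (r t₂) ^ 2)
        - deriv P t₂ * r t₂ * deriv r t₂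
        - ((b₁ ^ 2 - 4 * b₂ * b₀) / (4 * P t₂)) * (r t₂) ^ 2
        + ((deriv P t₂) ^ 2 / (4 * P t₂)) * (r t₂) ^ 2
        + (2 * k / (r t₂ / Real.sqrt (P t₂))) * Real.exp (-r t₂ / Real.sqrt (P t₂)) := by
  have hPderiv : ∀ t, HasDerivAt P (b₁ + 2 * b₂ * t) t := by
    intro t
    have h1 : P = fun u => b₀ + b₁ * u + b₂ * u ^ 2 := funext hPdef
    rw [h1]
    have h : HasDerivAt (fun u : ℝ => b₀ + b₁ * u + b₂ * u ^ 2)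
        (0 + b₁ * 1 + b₂ * ((2 : ℕ) * t ^ (2 - 1))) t :=
      ((hasDerivAt_const t b₀).add ((hasDerivAt_id t).const_mul b₁)).add
        ((hasDerivAt_pow 2 t).const_mul b₂)
    convert h using 1
    push_cast; ring
  have hQd : ∀ t, HasDerivAt (fun u : ℝ => b₁ + 2 * b₂ * u) (2 * b₂) t := by
    intro t
    have := ((hasDerivAt_id t).const_mul (2 * b₂)).const_add b₁
    simpa using this
  -- J has zero derivative everywhere
  have key : ∀ t, HasDerivAt (yukawaJ b₁ b₂ k L₃ P r) 0 t := by
    intro t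
    have hR0 : r t ≠ 0 := (hrpos t).ne'
    have hS0 : (0 : ℝ) < Real.sqrt (P t) := Real.sqrt_pos.mpr (hP t)
    have hS0' : Real.sqrt (P t) ≠ 0 := hS0.ne'
    have hdr : HasDerivAt r (deriv r t) t := (hr t).hasDerivAt
    have hdr' : HasDerivAt (deriv r) (deriv (deriv r) t) t := (hr' t).hasDerivAt
    have hdP := hPderiv t
    have hdS : HasDerivAt (fun u => Real.sqrt (P u))
        (1 / (2 * Real.sqrt (P t)) * (b₁ + 2 * b₂ * t)) t :=
      (Real.hasDerivAt_sqrt (hP t).ne').comp t hdP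
    -- derivative of V t in x at r t
    have hVx : deriv (fun x => V t x) (r t)
        = ((k / Real.sqrt (P t)) * (Real.exp (-r t / Real.sqrt (P t)) * (-1 / Real.sqrt (P t))) * r t
            - (k / Real.sqrt (P t)) * Real.exp (-r t / Real.sqrt (P t)) * 1) / (r t) ^ 2 := by
      have hfun : (fun x => V t x)
          = fun x => (k / Real.sqrt (P t)) * Real.exp (-x / Real.sqrt (P t)) / x :=
        funext (hV t)
      rw [hfun]
      have harg : HasDerivAt (fun x : ℝ => -x / Real.sqrt (P t)) (-1 / Real.sqrt (P t)) (r t) := by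
        simpa using (hasDerivAt_id (r t)).neg.div_const (Real.sqrt (P t))
      have hnum : HasDerivAt (fun x : ℝ => (k / Real.sqrt (P t)) * Real.exp (-x / Real.sqrt (P t)))
          ((k / Real.sqrt (P t)) * (Real.exp (-r t / Real.sqrt (P t)) * (-1 / Real.sqrt (P t)))) (r t) :=
        (harg.exp).const_mul _
      exact (hnum.div (hasDerivAt_id (r t)) hR0).deriv
    have hJ' :=
      (((hdP.mul ((hdr'.pow 2).add
          ((hasDerivAt_const t (L₃ ^ 2)).div (hdr.pow 2) (pow_ne_zero 2 hR0)))).sub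
        (((hQd t).mul hdr).mul hdr')).add
        ((hdr.pow 2).const_mul b₂)).add
        (((hdS.const_mul (2 * k)).div hdr hR0).mul ((hdr.neg.div hdS hS0').exp))
    have hgoal : HasDerivAt (yukawaJ b₁ b₂ k L₃ P r) _ t := hJ'
    convert hgoal using 1
    simp only [Pi.add_apply, Pi.sub_apply, Pi.mul_apply, Pi.div_apply, Pi.pow_apply, Pi.neg_apply]
    rw [heq t, hVx]
    have hS2 : Real.sqrt (P t) ^ 2 = P t := Real.sq_sqrt (hP t).le
    set S := Real.sqrt (P t) with hSdef
    rw [← hS2]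
    field_simp
    ring
  have hconst : ∀ a b, yukawaJ b₁ b₂ k L₃ P r a = yukawaJ b₁ b₂ k L₃ P r b :=
    is_const_of_deriv_eq_zero (fun t => (key t).differentiableAt) (fun t => (key t).deriv)
  have hIJ : ∀ t,
      P t * ((deriv r t) ^ 2 + L₃ ^ 2 / (r t) ^ 2)
        - deriv P t * r t * deriv r t
        - ((b₁ ^ 2 - 4 * b₂ * b₀) / (4 * P t)) * (r t) ^ 2
        + ((deriv P t) ^ 2 / (4 * P t)) * (r t) ^ 2
        + (2 * k / (r t / Real.sqrt (P t))) * Real.exp (-r t / Real.sqrt (P t))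
      = yukawaJ b₁ b₂ k L₃ P r t := by
    intro t
    have hdp : deriv P t = b₁ + 2 * b₂ * t := (hPderiv t).deriv
    have hR0 : r t ≠ 0 := (hrpos t).ne'
    have hS0' : Real.sqrt (P t) ≠ 0 := (Real.sqrt_pos.mpr (hP t)).ne'
    have hP0 : P t ≠ 0 := (hP t).ne'
    have hc : (b₁ + 2 * b₂ * t) ^ 2 - (b₁ ^ 2 - 4 * b₂ * b₀) = 4 * b₂ * P t := by
      rw [hPdef t]; ring
    rw [hdp]
    unfold yukawaJ
    have e1 : (2 * k / (r t / Real.sqrt (P t))) * Real.exp (-r t / Real.sqrt (P t))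
        = 2 * k * Real.sqrt (P t) / r t * Real.exp (-r t / Real.sqrt (P t)) := by
      rw [div_div_eq_mul_div]
    have e2 : ((b₁ + 2 * b₂ * t) ^ 2 / (4 * P t)) * (r t) ^ 2
        - ((b₁ ^ 2 - 4 * b₂ * b₀) / (4 * P t)) * (r t) ^ 2 = b₂ * (r t) ^ 2 := by
      field_simp
      linear_combination hc
    rw [e1]
    linarith [e2]
  intro t₁ t₂
  rw [hIJ t₁, hIJ t₂]
  exact hconst t₁ t₂
end

section
/- Let b₀,b₁,b₂,k₁,k₂ be real constants, m, n > 0, with P(t)=b₀+b₁t+b₂t² > 0 on an interval. Define V(t,r) = k₁ P(t)^{(m−2)/2}/r^m − k₂ P(t)^{(n−2)/2}/r^n. Let L₃ ∈ ℝ and suppose r(t) > 0 solves r'' = L₃²/r³ − ∂V/∂r(t, r(t)). Then I(t) = P ( (r')² + L₃²/r² ) − P' r r' − ((b₁²−4b₂b₀)/(4P)) r² + ((P')²/(4P)) r² + 2k₁ P^{m/2}/r^m − 2k₂ P^{n/2}/r^n is constant. -/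
/-- Derivative of `c / x^q` (real power) at a positive point. -/
lemma aux_div_rpow (c q : ℝ) {x : ℝ} (hx : 0 < x) :
    HasDerivAt (fun y : ℝ => c / y ^ q) (-(c * q / x ^ (q + 1))) x := by
  have h := (hasDerivAt_const x c).div
      (Real.hasDerivAt_rpow_const (p := q) (Or.inl hx.ne')) (by positivity)
  refine h.congr_deriv ?_
  have key : x ^ (q - 1) * x ^ (q + 1) = (x ^ q) ^ (2:ℕ) := by
    rw [← Real.rpow_natCast (x ^ q) 2, ← Real.rpow_mul hx.le, ← Real.rpow_add hx]
    ring_nf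
  have h1 : x ^ (q+1) ≠ 0 := by positivity
  have h2 : (x ^ q) ^ (2:ℕ) ≠ 0 := by positivity
  field_simp
  linear_combination (-(c * q)) * key

/-- The time-dependent interatomic pair potential
`V = k₁ P^{(m−2)/2}/r^m − k₂ P^{(n−2)/2}/r^n` with `P(t) = b₀+b₁t+b₂t²` is
integrable: the stated quadratic quantity `I` is a first integral. -/
theorem interatomic_first_integral
    (b₀ b₁ b₂ k₁ k₂ L₃ m n : ℝ) (hm : 0 < m) (hn : 0 < n)
    (P : ℝ → ℝ) (hPdef : ∀ t, P t = b₀ + b₁ * t + b₂ * t ^ 2)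
    (hP : ∀ t, 0 < P t)
    (V : ℝ → ℝ → ℝ)
    (hV : ∀ t x, V t x
      = k₁ * (P t) ^ ((m - 2) / 2) / x ^ m - k₂ * (P t) ^ ((n - 2) / 2) / x ^ n)
    (r : ℝ → ℝ) (hrpos : ∀ t, 0 < r t)
    (hr : Differentiable ℝ r) (hr' : Differentiable ℝ (deriv r))
    (heq : ∀ t, deriv (deriv r) t
      = L₃ ^ 2 / (r t) ^ 3 - deriv (fun x => V t x) (r t)) :
    ∀ t₁ t₂,
      P t₁ * ((deriv r t₁) ^ 2 + L₃ ^ 2 / (r t₁) ^ 2)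
        - deriv P t₁ * r t₁ * deriv r t₁
        - ((b₁ ^ 2 - 4 * b₂ * b₀) / (4 * P t₁)) * (r t₁) ^ 2
        + ((deriv P t₁) ^ 2 / (4 * P t₁)) * (r t₁) ^ 2
        + 2 * k₁ * (P t₁) ^ (m / 2) / (r t₁) ^ m
        - 2 * k₂ * (P t₁) ^ (n / 2) / (r t₁) ^ n
      = P t₂ * ((deriv r t₂) ^ 2 + L₃ ^ 2 / (r t₂) ^ 2)
        - deriv P t₂ * r t₂ * deriv r t₂
        - ((b₁ ^ 2 - 4 * b₂ * b₀) / (4 * P t₂)) * (r t₂) ^ 2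
        + ((deriv P t₂) ^ 2 / (4 * P t₂)) * (r t₂) ^ 2
        + 2 * k₁ * (P t₂) ^ (m / 2) / (r t₂) ^ m
        - 2 * k₂ * (P t₂) ^ (n / 2) / (r t₂) ^ n := by
  -- derivative of P
  have hPd : ∀ t, HasDerivAt P (b₁ + 2 * b₂ * t) t := by
    intro t
    have h : HasDerivAt (fun t : ℝ => b₀ + b₁ * t + b₂ * t ^ 2)
        (b₁ + 2 * b₂ * t) t := by
      have := (((hasDerivAt_id t).const_mul b₁).const_add b₀).add
        ((hasDerivAt_pow 2 t).const_mul b₂)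
      refine this.congr_deriv ?_
      ring
    have hPe : P = fun t => b₀ + b₁ * t + b₂ * t ^ 2 := funext hPdef
    rw [hPe]; exact h
  have hPderiv : ∀ t, deriv P t = b₁ + 2 * b₂ * t := fun t => (hPd t).deriv
  -- the equation of motion, with the potential derivative computed
  have hacc : ∀ t, deriv (deriv r) t = L₃ ^ 2 / (r t) ^ 3
      + k₁ * m * (P t) ^ ((m - 2) / 2) / (r t) ^ (m + 1)
      - k₂ * n * (P t) ^ ((n - 2) / 2) / (r t) ^ (n + 1) := by
    intro t
    have hx := hrpos t
    have hVfun : (fun x => V t x)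
        = fun x => k₁ * (P t) ^ ((m - 2) / 2) / x ^ m
          - k₂ * (P t) ^ ((n - 2) / 2) / x ^ n := funext (hV t)
    have hVd : HasDerivAt (fun x => V t x)
        (-(k₁ * (P t) ^ ((m - 2) / 2) * m / (r t) ^ (m + 1))
          - -(k₂ * (P t) ^ ((n - 2) / 2) * n / (r t) ^ (n + 1))) (r t) := by
      rw [hVfun]
      exact (aux_div_rpow _ m hx).sub (aux_div_rpow _ n hx)
    rw [heq t, hVd.deriv]
    ring
  -- the simplified first integral
  set g : ℝ → ℝ := fun t => P t * ((deriv r t) ^ 2 + L₃ ^ 2 / (r t) ^ 2)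
      - (b₁ + 2 * b₂ * t) * r t * deriv r t + b₂ * (r t) ^ 2
      + 2 * k₁ * (P t) ^ (m / 2) / (r t) ^ m
      - 2 * k₂ * (P t) ^ (n / 2) / (r t) ^ n with hgdef
  have hgd : ∀ t, HasDerivAt g 0 t := by
    intro t
    have hx := hrpos t
    have hp := hP t
    have hv : HasDerivAt r (deriv r t) t := (hr t).hasDerivAt
    have ha : HasDerivAt (deriv r) (deriv (deriv r) t) t := (hr' t).hasDerivAt
    have hxm : (0:ℝ) < (r t) ^ m := Real.rpow_pos_of_pos hx m
    have hxn : (0:ℝ) < (r t) ^ n := Real.rpow_pos_of_pos hx n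
    have H := (((((hPd t).mul ((ha.pow 2).add
          ((hasDerivAt_const t (L₃ ^ 2)).div (hv.pow 2) (pow_ne_zero 2 hx.ne')))).sub
        (((((hasDerivAt_id t).const_mul (2 * b₂)).const_add b₁).mul hv).mul ha)).add
        ((hv.pow 2).const_mul b₂)).add
        ((((hPd t).rpow_const (p := m / 2) (Or.inl hp.ne')).const_mul (2 * k₁)).div
          (hv.rpow_const (p := m) (Or.inl hx.ne')) hxm.ne')).sub
        ((((hPd t).rpow_const (p := n / 2) (Or.inl hp.ne')).const_mul (2 * k₂)).div
          (hv.rpow_const (p := n) (Or.inl hx.ne')) hxn.ne')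
    refine H.congr_deriv ?_
    rw [hacc t]
    have hA : (r t) ^ (m - 1) = (r t) ^ m / r t := by
      rw [Real.rpow_sub hx, Real.rpow_one]
    have hB : (r t) ^ (m + 1) = (r t) ^ m * r t := by
      rw [Real.rpow_add hx, Real.rpow_one]
    have hC : (P t) ^ (m / 2) = (P t) ^ ((m - 2) / 2) * P t := by
      rw [show m / 2 = (m - 2) / 2 + 1 by ring, Real.rpow_add hp, Real.rpow_one]
    have hD : (P t) ^ (m / 2 - 1) = (P t) ^ ((m - 2) / 2) := by
      rw [show m / 2 - 1 = (m - 2) / 2 by ring]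
    have hA' : (r t) ^ (n - 1) = (r t) ^ n / r t := by
      rw [Real.rpow_sub hx, Real.rpow_one]
    have hB' : (r t) ^ (n + 1) = (r t) ^ n * r t := by
      rw [Real.rpow_add hx, Real.rpow_one]
    have hC' : (P t) ^ (n / 2) = (P t) ^ ((n - 2) / 2) * P t := by
      rw [show n / 2 = (n - 2) / 2 + 1 by ring, Real.rpow_add hp, Real.rpow_one]
    have hD' : (P t) ^ (n / 2 - 1) = (P t) ^ ((n - 2) / 2) := by
      rw [show n / 2 - 1 = (n - 2) / 2 by ring]
    rw [hA, hB, hC, hD, hA', hB', hC', hD']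
    simp only [Pi.pow_apply, Pi.add_apply, Pi.div_apply, Pi.mul_apply, id]
    field_simp
    ring
  have hconst : ∀ t₁ t₂, g t₁ = g t₂ := fun t₁ t₂ =>
    is_const_of_deriv_eq_zero (fun t => (hgd t).differentiableAt)
      (fun t => (hgd t).deriv) t₁ t₂
  have key : ∀ t,
      P t * ((deriv r t) ^ 2 + L₃ ^ 2 / (r t) ^ 2)
        - deriv P t * r t * deriv r t
        - ((b₁ ^ 2 - 4 * b₂ * b₀) / (4 * P t)) * (r t) ^ 2
        + ((deriv P t) ^ 2 / (4 * P t)) * (r t) ^ 2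
        + 2 * k₁ * (P t) ^ (m / 2) / (r t) ^ m
        - 2 * k₂ * (P t) ^ (n / 2) / (r t) ^ n = g t := by
    intro t
    rw [hgdef, hPderiv t]
    have hp : (0:ℝ) < b₀ + b₁ * t + b₂ * t ^ 2 := by
      have := hP t; rwa [hPdef t] at this
    simp only [hPdef t]
    field_simp [hp.ne']
    ring_nf
    field_simp
    ring
  intro t₁ t₂
  rw [key t₁, key t₂]
  exact hconst t₁ t₂
end

section
/- Let ρ, α : ℝ → ℝ be smooth with ρ nonvanishing, G : ℝ → ℝ differentiable, and define U(t,q) = −(ρ''/(2ρ)) q² + ( α ρ''/ρ − α'' ) q + (1/ρ²) G( (q−α)/ρ ). Then for every twice differentiable q : ℝ → ℝ with q'' = −∂U/∂q(t, q(t)), the quantity I(t) = (1/2)[ ρ(t)(q'(t) − α'(t)) − ρ'(t)(q(t) − α(t)) ]² + G( (q(t)−α(t))/ρ(t) ) is constant. -/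
/-- The Lewis–Leach potentials
`U(t,q) = −(ρ''/(2ρ))q² + (αρ''/ρ − α'')q + ρ⁻²G((q−α)/ρ)` admit the quadratic
first integral `I = (1/2)[ρ(q'−α') − ρ'(q−α)]² + G((q−α)/ρ)`. -/
theorem lewis_leach_first_integral
    (ρ α : ℝ → ℝ) (G : ℝ → ℝ)
    (hρ : ContDiff ℝ (⊤ : ℕ∞) ρ) (hα : ContDiff ℝ (⊤ : ℕ∞) α) (hρne : ∀ t, ρ t ≠ 0)
    (hG : Differentiable ℝ G)
    (U : ℝ → ℝ → ℝ)
    (hU : ∀ t x, U t x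
      = -(deriv (deriv ρ) t / (2 * ρ t)) * x ^ 2
        + (α t * deriv (deriv ρ) t / ρ t - deriv (deriv α) t) * x
        + (1 / (ρ t) ^ 2) * G ((x - α t) / ρ t))
    (q : ℝ → ℝ) (hq : Differentiable ℝ q) (hq' : Differentiable ℝ (deriv q))
    (heq : ∀ t, deriv (deriv q) t = - deriv (fun x => U t x) (q t)) :
    ∀ t₁ t₂,
      (1 / 2) * (ρ t₁ * (deriv q t₁ - deriv α t₁)
          - deriv ρ t₁ * (q t₁ - α t₁)) ^ 2 + G ((q t₁ - α t₁) / ρ t₁)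
      = (1 / 2) * (ρ t₂ * (deriv q t₂ - deriv α t₂)
          - deriv ρ t₂ * (q t₂ - α t₂)) ^ 2 + G ((q t₂ - α t₂) / ρ t₂) := by
  have hρd : Differentiable ℝ ρ := hρ.differentiable (by simp)
  have hαd : Differentiable ℝ α := hα.differentiable (by simp)
  have hρ' : Differentiable ℝ (deriv ρ) := by
    have h : ContDiff ℝ (⊤ : ℕ∞) ρ := hρ.of_le (by simp)
    exact (contDiff_infty_iff_deriv.mp h).2.differentiable (by simp)
  have hα' : Differentiable ℝ (deriv α) := by
    have h : ContDiff ℝ (⊤ : ℕ∞) α := hα.of_le (by simp)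
    exact (contDiff_infty_iff_deriv.mp h).2.differentiable (by simp)
  set f : ℝ → ℝ := fun t =>
    (1 / 2) * (ρ t * (deriv q t - deriv α t) - deriv ρ t * (q t - α t)) ^ 2
      + G ((q t - α t) / ρ t) with hf
  have key : ∀ t, HasDerivAt f 0 t := by
    intro t
    set r := ρ t
    set r' := deriv ρ t
    set r'' := deriv (deriv ρ) t
    set a := α t
    set a' := deriv α t
    set a'' := deriv (deriv α) t
    set Q := q t
    set Q' := deriv q t
    set g := deriv G ((Q - a) / r) with hg
    have hrne : r ≠ 0 := hρne t
    -- derivative of U t in x at Q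
    have hUq : deriv (fun x => U t x) Q
        = -(r'' / (2 * r)) * (2 * Q) + (a * r'' / r - a'') + (1 / r ^ 2) * (g * (1 / r)) := by
      have h1 : (fun x => U t x) = fun x =>
          -(r'' / (2 * r)) * x ^ 2 + (a * r'' / r - a'') * x
            + (1 / r ^ 2) * G ((x - a) / r) := funext (hU t)
      rw [h1]
      have hL : HasDerivAt (fun x : ℝ => (x - a) / r) (1 / r) Q := by
        simpa using ((hasDerivAt_id Q).sub_const a).div_const r
      have hcomp : HasDerivAt (fun x : ℝ => G ((x - a) / r)) (g * (1 / r)) Q :=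
        (hG ((Q - a) / r)).hasDerivAt.comp Q hL
      have h2 : HasDerivAt (fun x : ℝ =>
          -(r'' / (2 * r)) * x ^ 2 + (a * r'' / r - a'') * x
            + (1 / r ^ 2) * G ((x - a) / r))
          (-(r'' / (2 * r)) * (2 * Q) + (a * r'' / r - a'') + (1 / r ^ 2) * (g * (1 / r))) Q := by
        have hp : HasDerivAt (fun x : ℝ => -(r'' / (2 * r)) * x ^ 2)
            (-(r'' / (2 * r)) * (2 * Q)) Q := by
          simpa [mul_comm, mul_assoc] using (hasDerivAt_pow 2 Q).const_mul (-(r'' / (2 * r)))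
        have hl : HasDerivAt (fun x : ℝ => (a * r'' / r - a'') * x)
            (a * r'' / r - a'') Q := by
          simpa using (hasDerivAt_id Q).const_mul (a * r'' / r - a'')
        exact (hp.add hl).add (hcomp.const_mul (1 / r ^ 2))
      exact h2.deriv
    have hQ'' : deriv (deriv q) t
        = -(-(r'' / (2 * r)) * (2 * Q) + (a * r'' / r - a'') + (1 / r ^ 2) * (g * (1 / r))) := by
      rw [heq t, hUq]
    -- derivative of the inner ratio
    have hu : HasDerivAt (fun s => (q s - α s) / ρ s)
        (((Q' - a') * r - (Q - a) * r') / r ^ 2) t :=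
      (((hq t).hasDerivAt).sub ((hαd t).hasDerivAt)).div ((hρd t).hasDerivAt) hrne
    have hGu : HasDerivAt (fun s => G ((q s - α s) / ρ s))
        (g * (((Q' - a') * r - (Q - a) * r') / r ^ 2)) t :=
      (hG ((Q - a) / r)).hasDerivAt.comp t hu
    -- derivative of P
    have hP : HasDerivAt (fun s => ρ s * (deriv q s - deriv α s) - deriv ρ s * (q s - α s))
        (r' * (Q' - a') + r * (deriv (deriv q) t - a'')
          - (r'' * (Q - a) + r' * (Q' - a'))) t := by
      exact (((hρd t).hasDerivAt.mul (((hq' t).hasDerivAt).sub ((hα' t).hasDerivAt))).sub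
        (((hρ' t).hasDerivAt).mul (((hq t).hasDerivAt).sub ((hαd t).hasDerivAt))))
    have hP2 : HasDerivAt (fun s => (1 / 2 : ℝ) *
        (ρ s * (deriv q s - deriv α s) - deriv ρ s * (q s - α s)) ^ 2)
        ((1 / 2 : ℝ) * ((2 : ℕ) * (r * (Q' - a') - r' * (Q - a)) ^ 1 *
          (r' * (Q' - a') + r * (deriv (deriv q) t - a'')
            - (r'' * (Q - a) + r' * (Q' - a'))))) t :=
      (hP.pow 2).const_mul (1 / 2)
    have htotal := hP2.add hGu
    convert htotal using 1
    case e'_4 => rfl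
    case e'_5 => rfl
    case e'_8 => rfl
    rw [hQ'']
    field_simp
    ring
  intro t₁ t₂
  have hc : ∀ s₁ s₂, f s₁ = f s₂ := by
    intro s₁ s₂
    have hcon := is_const_of_deriv_eq_zero (fun s => (key s).differentiableAt)
      (fun s => (key s).deriv)
    exact hcon s₁ s₂
  exact hc t₁ t₂
end

section
/- Let Ω, F₁ : ℝ → ℝ be continuous, ρ, α smooth with ρ > 0 satisfying the Ermakov–Pinney equation ρ'' + Ω²ρ = k/ρ³ and the forced equation α'' + Ω²α = F₁, and let G̃ : ℝ → ℝ be differentiable. Define U(t,q) = (1/2)Ω(t)²q² − F₁(t)q + (1/ρ²)G̃((q−α)/ρ). Then along every solution of q'' = −∂U/∂q, the quantity I = (1/2)[ρ(q' − α') − ρ'(q − α)]² + (k/2)((q−α)/ρ)² + G̃((q−α)/ρ) is constant. -/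
/-- The Ermakov–Pinney form of the Lewis–Leach potentials: with
`ρ'' + Ω²ρ = k/ρ³` and `α'' + Ω²α = F₁`, the potential
`U = (1/2)Ω²q² − F₁q + ρ⁻²G̃((q−α)/ρ)` admits the Lewis-type invariant. -/
theorem ermakov_pinney_lewis_invariant
    (Ω F₁ : ℝ → ℝ) (hΩ : Continuous Ω) (hF₁ : Continuous F₁)
    (ρ α : ℝ → ℝ) (k : ℝ)
    (hρ : ContDiff ℝ (⊤ : ℕ∞) ρ) (hα : ContDiff ℝ (⊤ : ℕ∞) α) (hρpos : ∀ t, 0 < ρ t)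
    (hEP : ∀ t, deriv (deriv ρ) t + (Ω t) ^ 2 * ρ t = k / (ρ t) ^ 3)
    (hforced : ∀ t, deriv (deriv α) t + (Ω t) ^ 2 * α t = F₁ t)
    (Gt : ℝ → ℝ) (hGt : Differentiable ℝ Gt)
    (U : ℝ → ℝ → ℝ)
    (hU : ∀ t x, U t x
      = (1 / 2) * (Ω t) ^ 2 * x ^ 2 - F₁ t * x
        + (1 / (ρ t) ^ 2) * Gt ((x - α t) / ρ t))
    (q : ℝ → ℝ) (hq : Differentiable ℝ q) (hq' : Differentiable ℝ (deriv q))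
    (heq : ∀ t, deriv (deriv q) t = - deriv (fun x => U t x) (q t)) :
    ∀ t₁ t₂,
      (1 / 2) * (ρ t₁ * (deriv q t₁ - deriv α t₁)
          - deriv ρ t₁ * (q t₁ - α t₁)) ^ 2
        + (k / 2) * ((q t₁ - α t₁) / ρ t₁) ^ 2 + Gt ((q t₁ - α t₁) / ρ t₁)
      = (1 / 2) * (ρ t₂ * (deriv q t₂ - deriv α t₂)
          - deriv ρ t₂ * (q t₂ - α t₂)) ^ 2
        + (k / 2) * ((q t₂ - α t₂) / ρ t₂) ^ 2 + Gt ((q t₂ - α t₂) / ρ t₂) := by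
  have hrhoInf : ContDiff ℝ ((⊤ : ℕ∞) : WithTop ℕ∞) ρ := hρ.of_le (by simp)
  have halphaInf : ContDiff ℝ ((⊤ : ℕ∞) : WithTop ℕ∞) α := hα.of_le (by simp)
  have hρd : Differentiable ℝ ρ := hrhoInf.differentiable (by simp)
  have hρ'd : Differentiable ℝ (deriv ρ) :=
    ((contDiff_infty_iff_deriv.mp hrhoInf).2).differentiable (by simp)
  have hαd : Differentiable ℝ α := halphaInf.differentiable (by simp)
  have hα'd : Differentiable ℝ (deriv α) :=
    ((contDiff_infty_iff_deriv.mp halphaInf).2).differentiable (by simp)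
  set I : ℝ → ℝ := fun t =>
    (1 / 2) * (ρ t * (deriv q t - deriv α t) - deriv ρ t * (q t - α t)) ^ 2
      + (k / 2) * ((q t - α t) / ρ t) ^ 2 + Gt ((q t - α t) / ρ t) with hIdef
  have key : ∀ t, HasDerivAt I 0 t := by
    intro t
    have hRne : ρ t ≠ 0 := (hρpos t).ne'
    set y : ℝ := (q t - α t) / ρ t with hy_def
    -- derivative of U t in x at q t
    have hUx : HasDerivAt (fun x => U t x)
        (((Ω t) ^ 2 * q t - F₁ t) + (1 / (ρ t) ^ 2) * (deriv Gt y * (1 / ρ t)))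
        (q t) := by
      have h1 : (fun x => U t x) = fun x =>
          (1 / 2) * (Ω t) ^ 2 * x ^ 2 - F₁ t * x
            + (1 / (ρ t) ^ 2) * Gt ((x - α t) / ρ t) := funext (hU t)
      rw [h1]
      have hinner : HasDerivAt (fun x => (x - α t) / ρ t) (1 / ρ t) (q t) := by
        simpa using ((hasDerivAt_id (q t)).sub_const (α t)).div_const (ρ t)
      have hg : HasDerivAt (fun x => Gt ((x - α t) / ρ t))
          (deriv Gt y * (1 / ρ t)) (q t) :=
        ((hGt y).hasDerivAt).comp (q t) hinner
      have hpoly : HasDerivAt (fun x => (1 / 2) * (Ω t) ^ 2 * x ^ 2 - F₁ t * x)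
          ((Ω t) ^ 2 * q t - F₁ t) (q t) := by
        have h := ((hasDerivAt_pow 2 (q t)).const_mul ((1 / 2) * (Ω t) ^ 2)).sub
          ((hasDerivAt_id (q t)).const_mul (F₁ t))
        exact h.congr_deriv (by ring)
      exact hpoly.add (hg.const_mul _)
    have hq2 : deriv (deriv q) t
        = -(((Ω t) ^ 2 * q t - F₁ t) + (1 / (ρ t) ^ 2) * (deriv Gt y * (1 / ρ t))) := by
      rw [heq t, hUx.deriv]
    have hα2 : deriv (deriv α) t = F₁ t - (Ω t) ^ 2 * α t := by
      linarith [hforced t]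
    have hρ2 : deriv (deriv ρ) t = k / (ρ t) ^ 3 - (Ω t) ^ 2 * ρ t := by
      linarith [hEP t]
    have hy : HasDerivAt (fun s => (q s - α s) / ρ s)
        (((deriv q t - deriv α t) * ρ t - (q t - α t) * deriv ρ t) / (ρ t) ^ 2) t :=
      ((hq t).hasDerivAt.sub (hαd t).hasDerivAt).div (hρd t).hasDerivAt hRne
    have hp : HasDerivAt (fun s => ρ s * (deriv q s - deriv α s) - deriv ρ s * (q s - α s))
        ((deriv ρ t * (deriv q t - deriv α t)
          + ρ t * (deriv (deriv q) t - deriv (deriv α) t))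
          - (deriv (deriv ρ) t * (q t - α t) + deriv ρ t * (deriv q t - deriv α t))) t :=
      ((hρd t).hasDerivAt.mul ((hq' t).hasDerivAt.sub (hα'd t).hasDerivAt)).sub
        ((hρ'd t).hasDerivAt.mul ((hq t).hasDerivAt.sub (hαd t).hasDerivAt))
    have hGy : HasDerivAt (fun s => Gt ((q s - α s) / ρ s))
        (deriv Gt y * (((deriv q t - deriv α t) * ρ t - (q t - α t) * deriv ρ t) / (ρ t) ^ 2))
        t := ((hGt y).hasDerivAt).comp t hy
    have total := ((hp.pow 2).const_mul (1 / 2 : ℝ)).add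
      ((hy.pow 2).const_mul (k / 2 : ℝ)) |>.add hGy
    have hIeq : HasDerivAt I
        ((1 / 2) * ((2 : ℕ) * (ρ t * (deriv q t - deriv α t) - deriv ρ t * (q t - α t)) ^ 1
            * ((deriv ρ t * (deriv q t - deriv α t)
              + ρ t * (deriv (deriv q) t - deriv (deriv α) t))
              - (deriv (deriv ρ) t * (q t - α t) + deriv ρ t * (deriv q t - deriv α t))))
          + (k / 2) * ((2 : ℕ) * ((q t - α t) / ρ t) ^ 1
            * (((deriv q t - deriv α t) * ρ t - (q t - α t) * deriv ρ t) / (ρ t) ^ 2))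
          + deriv Gt y * (((deriv q t - deriv α t) * ρ t - (q t - α t) * deriv ρ t) / (ρ t) ^ 2))
        t := total
    convert hIeq using 1
    rw [hq2, hα2, hρ2, hy_def]
    field_simp
    ring
  exact fun t₁ t₂ =>
    is_const_of_deriv_eq_zero (fun t => (key t).differentiableAt)
      (fun t => (key t).deriv) t₁ t₂
end
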